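/- arXiv:1307.3943 — 3 statements merged into one kernel-verified Lean document; each statement's English description precedes it below -/
import Mathlib

section
/- Every metric space X of countable asymptotic dimension is large scale finitistic: for every r > 0 there is a uniformly bounded cover 𝒰 of X whose Lebesgue number is at least r and an n(𝒰) ∈ ℕ such that each x ∈ X belongs to at most n(𝒰) elements of 𝒰. -/
/-- A family of subsets is `R`-disjoint if distinct members are at distance `> R`. -/
def RDisjointFam {X : Type*} [MetricSpace X] (R : ℝ) (𝒲 : Set (Set X)) : Prop :=
  ∀ U ∈ 𝒲, ∀ V ∈ 𝒲, U ≠ V → ∀ x ∈ U, ∀ y ∈ V, R < dist x y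

/-- `𝒰` is uniformly bounded. -/
def UnifBounded {X : Type*} [MetricSpace X] (𝒰 : Set (Set X)) : Prop :=
  ∃ M : ℝ, 0 < M ∧ ∀ U ∈ 𝒰, EMetric.diam U ≤ ENNReal.ofReal M

/-- `U` can be expressed as a union of at most `k` families from `𝒱` that are
`R`-disjoint. -/
def UnionOfFams {X : Type*} [MetricSpace X] (k : ℕ) (R : ℝ) (𝒱 : Set (Set X))
    (U : Set X) : Prop :=
  ∃ 𝒲 : Fin k → Set (Set X), (∀ j, 𝒲 j ⊆ 𝒱 ∧ RDisjointFam R (𝒲 j)) ∧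
    U = ⋃ j, ⋃₀ 𝒲 j

/-- `X` is of countable asymptotic dimension (Definition 7.1). -/
def CountableAsdim (X : Type*) [MetricSpace X] : Prop :=
  ∃ nseq : ℕ → ℕ, (∀ i, 1 ≤ nseq i) ∧
    ∀ R : ℕ → ℝ, (∀ i, 0 < R i) →
      ∃ 𝒱 : ℕ → Set (Set X), 𝒱 1 = {Set.univ} ∧
        (∀ i, 1 ≤ i → ∀ U ∈ 𝒱 i, UnionOfFams (nseq i) (R i) (𝒱 (i + 1)) U) ∧
        ∃ m, 1 ≤ m ∧ UnifBounded (𝒱 m)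

/-- Every metric space of countable asymptotic dimension is large scale
finitistic: for every `r > 0` there is a uniformly bounded cover `𝒰` of Lebesgue number at
least `r` and an `n(𝒰) ∈ ℕ` such that each point belongs to at most `n(𝒰)` members of
`𝒰`. -/
theorem stmt17 {X : Type*} [MetricSpace X] (hcad : CountableAsdim X) :
    ∀ r > (0:ℝ), ∃ 𝒰 : Set (Set X),
      (∀ x : X, ∃ U ∈ 𝒰, x ∈ U) ∧ UnifBounded 𝒰 ∧
      (∀ x : X, ∃ U ∈ 𝒰, Metric.ball x r ⊆ U) ∧
      ∃ nU : ℕ, ∀ x : X, {U ∈ 𝒰 | x ∈ U}.encard ≤ (nU : ℕ∞) := by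
  classical
  intro r hr
  obtain ⟨nseq, hn1, hmain⟩ := hcad
  obtain ⟨𝒱, h𝒱1, hdec, m, hm1, M, hM0, hMb⟩ := hmain (fun _ => 2 * r) (fun _ => by show (0:ℝ) < 2 * r; linarith)
  have key : ∀ i, 1 ≤ i → ∃ (K : ℕ) (𝒲 : Fin K → Set (Set X)),
      (∀ j, 𝒲 j ⊆ 𝒱 i ∧ RDisjointFam (2 * r) (𝒲 j)) ∧
      (⋃ j, ⋃₀ 𝒲 j) = Set.univ := by
    intro i hi
    induction i, hi using Nat.le_induction with
    | base =>
      refine ⟨1, fun _ => {Set.univ}, fun j => ⟨by rw [h𝒱1], ?_⟩, by simp [Set.iUnion_const]⟩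
      intro A hA B hB hAB
      simp only [Set.mem_singleton_iff] at hA hB
      exact absurd (hA.trans hB.symm) hAB
    | succ i hi ih =>
      obtain ⟨K, 𝒲, h1, h2⟩ := ih
      have hdec' : ∀ U, U ∈ 𝒱 i → ∃ F : Fin (nseq i) → Set (Set X),
          (∀ j, F j ⊆ 𝒱 (i+1) ∧ RDisjointFam (2*r) (F j)) ∧ U = ⋃ j, ⋃₀ F j :=
        fun U hU => hdec i hi U hU
      choose F hF hFeq using hdec'
      have hsub : ∀ U (hU : U ∈ 𝒱 i) l V, V ∈ F U hU l → V ⊆ U := by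
        intro U hU l V hV z hz
        rw [hFeq U hU]
        exact Set.mem_iUnion.2 ⟨l, V, hV, hz⟩
      refine ⟨K * nseq i, fun p => {V | ∃ U, ∃ hU : U ∈ 𝒱 i,
        U ∈ 𝒲 (finProdFinEquiv.symm p).1 ∧ V ∈ F U hU (finProdFinEquiv.symm p).2}, ?_, ?_⟩
      · intro p
        constructor
        · rintro V ⟨U, hU, _, hV⟩
          exact (hF U hU _).1 hV
        · rintro V1 ⟨U1, hU1, hUW1, hV1⟩ V2 ⟨U2, hU2, hUW2, hV2⟩ hne x hx y hy
          by_cases hUeq : U1 = U2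
          · subst hUeq
            exact (hF U1 hU1 _).2 V1 hV1 V2 hV2 hne x hx y hy
          · exact (h1 _).2 U1 hUW1 U2 hUW2 hUeq x (hsub U1 hU1 _ V1 hV1 hx)
              y (hsub U2 hU2 _ V2 hV2 hy)
      · apply Set.eq_univ_of_forall
        intro x
        have hx : x ∈ ⋃ j, ⋃₀ 𝒲 j := by rw [h2]; trivial
        obtain ⟨j, hj⟩ := Set.mem_iUnion.1 hx
        obtain ⟨U, hU, hxU⟩ := hj
        have hU𝒱 : U ∈ 𝒱 i := (h1 j).1 hU
        have hx2 : x ∈ ⋃ l, ⋃₀ F U hU𝒱 l := by rw [← hFeq U hU𝒱]; exact hxU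
        obtain ⟨l, hl⟩ := Set.mem_iUnion.1 hx2
        obtain ⟨V, hV, hxV⟩ := hl
        refine Set.mem_iUnion.2 ⟨finProdFinEquiv (j, l), ⟨V, ⟨U, hU𝒱, ?_, ?_⟩, hxV⟩⟩
        · rw [Equiv.symm_apply_apply]; exact hU
        · rw [Equiv.symm_apply_apply]; exact hV
  obtain ⟨K, 𝒲, h1, h2⟩ := key m hm1
  have hcov : ∀ x : X, ∃ j, ∃ V ∈ 𝒲 j, x ∈ V := by
    intro x
    have hx : x ∈ ⋃ j, ⋃₀ 𝒲 j := by rw [h2]; trivial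
    obtain ⟨j, hj⟩ := Set.mem_iUnion.1 hx
    obtain ⟨V, hV, hxV⟩ := hj
    exact ⟨j, V, hV, hxV⟩
  set thick : Set X → Set X := fun V => {y | ∃ v ∈ V, dist y v < r} with hthick
  refine ⟨{S | ∃ j, ∃ V ∈ 𝒲 j, S = thick V}, ?_, ?_, ?_, ?_⟩
  · intro x
    obtain ⟨j, V, hV, hxV⟩ := hcov x
    exact ⟨thick V, ⟨j, V, hV, rfl⟩, ⟨x, hxV, by simpa using hr⟩⟩
  · refine ⟨M + 2 * r, by linarith, ?_⟩
    rintro S ⟨j, V, hV, rfl⟩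
    apply EMetric.diam_le
    rintro x ⟨v1, hv1, hd1⟩ y ⟨v2, hv2, hd2⟩
    have hvv : dist v1 v2 ≤ M := by
      have h := (EMetric.edist_le_diam_of_mem hv1 hv2).trans (hMb V ((h1 j).1 hV))
      rw [edist_dist] at h
      exact (ENNReal.ofReal_le_ofReal_iff hM0.le).1 h
    rw [edist_dist]
    apply ENNReal.ofReal_le_ofReal
    have h4 : dist x y ≤ dist x v1 + dist v1 v2 + dist v2 y := dist_triangle4 x v1 v2 y
    have hc : dist v2 y = dist y v2 := dist_comm v2 y
    linarith
  · intro x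
    obtain ⟨j, V, hV, hxV⟩ := hcov x
    refine ⟨thick V, ⟨j, V, hV, rfl⟩, ?_⟩
    intro y hy
    exact ⟨x, hxV, hy⟩
  · refine ⟨K, ?_⟩
    intro x
    obtain ⟨j0, -, -, -⟩ := hcov x
    haveI : Nonempty (Fin K) := ⟨j0⟩
    set f : Set X → Fin K := fun U =>
      if h : ∃ j, ∃ V ∈ 𝒲 j, U = thick V ∧ x ∈ U then h.choose else Classical.arbitrary _
      with hfdef
    have hfspec : ∀ U, (∃ j, ∃ V ∈ 𝒲 j, U = thick V) → x ∈ U →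
        ∃ V ∈ 𝒲 (f U), U = thick V ∧ x ∈ U := by
      rintro U ⟨j, V, hV, rfl⟩ hxU
      have h : ∃ j', ∃ V' ∈ 𝒲 j', thick V = thick V' ∧ x ∈ thick V := ⟨j, V, hV, rfl, hxU⟩
      have hfU : f (thick V) = h.choose := dif_pos h
      rw [hfU]
      exact h.choose_spec
    have hinj : Set.InjOn f {U ∈ {S | ∃ j, ∃ V ∈ 𝒲 j, S = thick V} | x ∈ U} := by
      rintro U1 ⟨hU1mem, hxU1⟩ U2 ⟨hU2mem, hxU2⟩ hfeq
      obtain ⟨V1, hV1, hE1, hx1⟩ := hfspec U1 hU1mem hxU1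
      obtain ⟨V2, hV2, hE2, hx2⟩ := hfspec U2 hU2mem hxU2
      by_contra hne
      have hVne : V1 ≠ V2 := by
        rintro rfl
        exact hne (hE1.trans hE2.symm)
      rw [hfeq] at hV1
      obtain ⟨v1, hv1, hd1⟩ : x ∈ thick V1 := hE1 ▸ hx1
      obtain ⟨v2, hv2, hd2⟩ : x ∈ thick V2 := hE2 ▸ hx2
      have hbig : 2 * r < dist v1 v2 := (h1 (f U2)).2 V1 hV1 V2 hV2 hVne v1 hv1 v2 hv2
      have ht : dist v1 v2 ≤ dist v1 x + dist x v2 := dist_triangle v1 x v2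
      have hc : dist v1 x = dist x v1 := dist_comm v1 x
      linarith
    calc {U ∈ {S | ∃ j, ∃ V ∈ 𝒲 j, S = thick V} | x ∈ U}.encard
        = (f '' {U ∈ {S | ∃ j, ∃ V ∈ 𝒲 j, S = thick V} | x ∈ U}).encard :=
          (hinj.encard_image).symm
      _ ≤ (Set.univ : Set (Fin K)).encard := Set.encard_mono (Set.subset_univ _)
      _ = (K : ℕ∞) := by simp [Set.encard_univ]
end

section
/- Let X be a metric space, S a set, A ⊂ X, and let U ⊂ X satisfy diam(U) ≤ K and A ∩ B(U,R) = ∅, where R, K > 0 and B(U,R) = {x ∈ X : dist(x,U) < R}. Let u ≥ 2/(R+1) and suppose f : A → Δ(S) is a (u,u)-Lipschitz partition of unity that is R'-cobounded for some R' > 0. Let v_U ∈ S be a vertex not in the carrier of f(A), i.e., f(a)(v_U) = 0 for all a ∈ A. Then the map g : A ∪ U → Δ(S) defined by g|A = f and g(x) = the Dirac function at v_U for x ∈ U, is (u,u)-Lipschitz and (R' + K)-cobounded. -/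
/-- The `l¹` distance between two (finitely supported) functions `S → ℝ`,
modeling the metric of `Δ(S) ⊆ l¹(S)`. -/
noncomputable def l1dist {S : Type*} (φ ψ : S → ℝ) : ℝ := ∑ᶠ v, |φ v - ψ v|

/-- `φ` is a point of `Δ(S)`. -/
def IsDelta {S : Type*} (φ : S → ℝ) : Prop :=
  (∀ v, 0 ≤ φ v) ∧ (Function.support φ).Finite ∧ ∑ᶠ v, φ v = 1

/-- `f` is `(ε,ε)`-Lipschitz on `A` (with respect to the `l¹` metric on `Δ(S)`). -/
def LipschitzEpsOn {X S : Type*} [MetricSpace X] (ε : ℝ) (f : X → S → ℝ) (A : Set X) : Prop :=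
  ∀ x ∈ A, ∀ y ∈ A, l1dist (f x) (f y) ≤ ε * dist x y + ε

/-- `f` is `K`-cobounded on `A`. -/
def CoboundedOn {X S : Type*} [MetricSpace X] (K : ℝ) (f : X → S → ℝ) (A : Set X) : Prop :=
  ∀ v : S, EMetric.diam {x ∈ A | 0 < f x v} ≤ ENNReal.ofReal K

/-- Claim 1 in the proof of Theorem 7.6. Let `diam U ≤ K` and
`A ∩ B(U,R) = ∅`, let `u ≥ 2/(R+1)`, and let `f : A → Δ(S)` be a `(u,u)`-Lipschitz,
`R'`-cobounded partition of unity. If `v_U` is a vertex not in the carrier of `f(A)`,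
then the map `g : A ∪ U → Δ(S)` which equals `f` on `A` and sends all of `U` to the
Dirac function at `v_U` is `(u,u)`-Lipschitz and `(R' + K)`-cobounded. -/
theorem stmt18 {X S : Type*} [MetricSpace X] [DecidableEq S] (A U : Set X)
    (R K R' u : ℝ) (hR : 0 < R) (hK : 0 < K) (hR' : 0 < R')
    (hU : EMetric.diam U ≤ ENNReal.ofReal K)
    (hAU : A ∩ Metric.thickening R U = ∅)
    (hu : 2 / (R + 1) ≤ u)
    (f : X → S → ℝ) (hf : ∀ a ∈ A, IsDelta (f a))
    (hflip : LipschitzEpsOn u f A) (hfcob : CoboundedOn R' f A)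
    (vU : S) (hvU : ∀ a ∈ A, f a vU = 0)
    (g : X → S → ℝ)
    (hgA : ∀ a ∈ A, g a = f a)
    (hgU : ∀ x ∈ U, ∀ w : S, g x w = if w = vU then 1 else 0) :
    LipschitzEpsOn u g (A ∪ U) ∧ CoboundedOn (R' + K) g (A ∪ U) := by
  have hRpos : (0:ℝ) < R + 1 := by linarith
  have hupos : 0 < u := lt_of_lt_of_le (by positivity) hu
  have hdistR : ∀ x ∈ A, ∀ y ∈ U, R ≤ dist x y := by
    intro x hx y hy
    by_contra h
    push_neg at h
    have hmem : x ∈ Metric.thickening R U := Metric.mem_thickening_iff.mpr ⟨y, hy, h⟩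
    exact Set.eq_empty_iff_forall_notMem.mp hAU x ⟨hx, hmem⟩
  have hl1sym : ∀ φ ψ : S → ℝ, l1dist φ ψ = l1dist ψ φ := by
    intro φ ψ
    unfold l1dist
    simp_rw [abs_sub_comm]
  have hl1 : ∀ x ∈ A, ∀ y ∈ U, l1dist (g x) (g y) = 2 := by
    intro x hx y hy
    obtain ⟨hpos, hfin, hsum⟩ := hf x hx
    have hgx : g x = f x := hgA x hx
    have key : ∀ v, |g x v - g y v| = f x v + (if v = vU then 1 else 0) := by
      intro v
      rw [hgx, hgU y hy v]
      by_cases hv : v = vU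
      · subst hv; simp [hvU x hx]
      · simp [hv, abs_of_nonneg (hpos v)]
    unfold l1dist
    simp_rw [key]
    rw [finsum_add_distrib hfin
      (Set.Finite.subset (Set.finite_singleton vU) (by
        intro v hv
        by_contra hne
        simp only [Set.mem_singleton_iff] at hne
        exact hv (by simp [hne])))]
    rw [hsum, finsum_eq_single _ vU (by intro v hv; simp [hv])]
    norm_num
  constructor
  · intro x hx y hy
    rcases hx with hxA | hxU
    · rcases hy with hyA | hyU
      · rw [hgA x hxA, hgA y hyA]
        exact hflip x hxA y hyA
      · rw [hl1 x hxA y hyU]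
        have hd := hdistR x hxA y hyU
        have h2 : 2 / (R+1) * (R+1) ≤ u * (dist x y + 1) := by
          apply mul_le_mul hu (by linarith) (by positivity) (le_of_lt hupos)
        rw [div_mul_cancel₀] at h2
        · linarith
        · exact ne_of_gt hRpos
    · rcases hy with hyA | hyU
      · rw [hl1sym, hl1 y hyA x hxU, dist_comm]
        have hd := hdistR y hyA x hxU
        have h2 : 2 / (R+1) * (R+1) ≤ u * (dist y x + 1) := by
          apply mul_le_mul hu (by linarith) (by positivity) (le_of_lt hupos)
        rw [div_mul_cancel₀] at h2
        · linarith
        · exact ne_of_gt hRpos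
      · have : ∀ v, |g x v - g y v| = 0 := by
          intro v
          rw [hgU x hxU v, hgU y hyU v]
          simp
        unfold l1dist
        simp_rw [this]
        rw [finsum_zero]
        positivity
  · intro v
    by_cases hv : v = vU
    · have hsub : {x ∈ A ∪ U | 0 < g x v} ⊆ U := by
        rintro x ⟨hxAU | hxU, hgx⟩
        · rw [hgA x hxAU, hv, hvU x hxAU] at hgx
          exact absurd hgx (lt_irrefl 0)
        · exact hxU
      calc EMetric.diam {x ∈ A ∪ U | 0 < g x v} ≤ EMetric.diam U := EMetric.diam_mono hsub
        _ ≤ ENNReal.ofReal K := hU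
        _ ≤ ENNReal.ofReal (R' + K) := ENNReal.ofReal_le_ofReal (by linarith)
    · have hsub : {x ∈ A ∪ U | 0 < g x v} ⊆ {x ∈ A | 0 < f x v} := by
        rintro x ⟨hxAU | hxU, hgx⟩
        · exact ⟨hxAU, by rwa [hgA x hxAU] at hgx⟩
        · rw [hgU x hxU v] at hgx
          simp [hv] at hgx
      calc EMetric.diam {x ∈ A ∪ U | 0 < g x v} ≤ EMetric.diam {x ∈ A | 0 < f x v} :=
            EMetric.diam_mono hsub
        _ ≤ ENNReal.ofReal R' := hfcob v
        _ ≤ ENNReal.ofReal (R' + K) := ENNReal.ofReal_le_ofReal (by linarith)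
end

section
/- A metric space X has weak straight finite decomposition complexity (regarded as a one-element metric family) if and only if X is of countable asymptotic dimension. -/
/-- `X` (regarded as a one-element metric family) has weak straight finite decomposition
complexity (Ramras–Ramsey): there is a sequence `k₁, k₂, …` of positive integers such that
for every increasing sequence `R₁ < R₂ < …` of positive numbers there are `n ∈ ℕ` and
families `𝒳₀ = {X}, 𝒳₁, …, 𝒳ₙ` with each element of `𝒳ᵢ` a union of at most `k_{i+1}`
families from `𝒳_{i+1}` that are `R_{i+1}`-disjoint and `𝒳ₙ` uniformly bounded. -/
def WSFDC (X : Type*) [MetricSpace X] : Prop :=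
  ∃ k : ℕ → ℕ, (∀ i, 1 ≤ k i) ∧
    ∀ R : ℕ → ℝ, (∀ i, 0 < R i) → StrictMono R →
      ∃ n : ℕ, ∃ 𝒳 : ℕ → Set (Set X), 𝒳 0 = {Set.univ} ∧
        (∀ i, i < n → ∀ U ∈ 𝒳 i, UnionOfFams (k (i + 1)) (R (i + 1)) (𝒳 (i + 1)) U) ∧
        UnifBounded (𝒳 n)

lemma unionOfFams_mono {X : Type*} [MetricSpace X] {k : ℕ} {r s : ℝ} (hrs : r ≤ s)
    {𝒱 : Set (Set X)} {U : Set X} (h : UnionOfFams k s 𝒱 U) : UnionOfFams k r 𝒱 U := by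
  obtain ⟨𝒲, h1, h2⟩ := h
  exact ⟨𝒲, fun j => ⟨(h1 j).1, fun A hA B hB hne x hx y hy =>
    lt_of_le_of_lt hrs ((h1 j).2 A hA B hB hne x hx y hy)⟩, h2⟩

lemma unionOfFams_self {X : Type*} [MetricSpace X] {k : ℕ} (hk : 1 ≤ k) (R : ℝ)
    {𝒱 : Set (Set X)} {U : Set X} (hU : U ∈ 𝒱) : UnionOfFams k R 𝒱 U := by
  refine ⟨fun _ => {U}, fun j => ⟨Set.singleton_subset_iff.mpr hU, ?_⟩, ?_⟩
  · intro A hA B hB hne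
    simp only [Set.mem_singleton_iff] at hA hB
    exact absurd (hA.trans hB.symm) hne
  · have : Nonempty (Fin k) := ⟨⟨0, hk⟩⟩
    simp [Set.sUnion_singleton, Set.iUnion_const]

/-- Remark 7.9. A metric space has weak straight finite decomposition
complexity (as a one-element metric family) if and only if it is of countable asymptotic
dimension. -/
theorem stmt19 {X : Type*} [MetricSpace X] : WSFDC X ↔ CountableAsdim X := by
  constructor
  · rintro ⟨k, hk, hX⟩
    refine ⟨k, hk, ?_⟩
    intro R hR
    set S : ℕ → ℝ := fun i => (i + 1 : ℝ) + ∑ j ∈ Finset.range (i + 1), max (R j) 0 with hS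
    have hsum : ∀ i, (0:ℝ) ≤ ∑ j ∈ Finset.range (i + 1), max (R j) 0 := fun i =>
      Finset.sum_nonneg fun j _ => le_max_right _ _
    have hSpos : ∀ i, 0 < S i := by
      intro i
      have := hsum i
      have : (0:ℝ) < (i + 1 : ℝ) := by positivity
      simp only [hS]
      linarith [hsum i]
    have hSmono : StrictMono S := by
      apply strictMono_nat_of_lt_succ
      intro i
      have h := Finset.sum_range_succ (fun j => max (R j) 0) (i + 1)
      have h2 : (0:ℝ) ≤ max (R (i + 1)) 0 := le_max_right _ _
      simp only [hS]
      push_cast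
      rw [h]
      linarith
    have hRS : ∀ i, R i ≤ S i := by
      intro i
      have h1 : max (R i) 0 ≤ ∑ j ∈ Finset.range (i + 1), max (R j) 0 :=
        Finset.single_le_sum (fun j _ => le_max_right (R j) 0)
          (Finset.mem_range.mpr (Nat.lt_succ_self i))
      have h2 : (0:ℝ) ≤ (i + 1 : ℝ) := by positivity
      have h3 : R i ≤ max (R i) 0 := le_max_left _ _
      simp only [hS]
      linarith
    obtain ⟨n, 𝒳, h0, hdec, hbd⟩ := hX S hSpos hSmono
    refine ⟨fun i => 𝒳 (min (i - 1) n), by simp [h0], ?_, n + 1, Nat.le_add_left _ _, ?_⟩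
    · intro i hi U hU
      dsimp only at hU ⊢
      rcases lt_or_ge (i - 1) n with h | h
      · have h1 : min (i - 1) n = i - 1 := min_eq_left h.le
        have hi1 : i - 1 + 1 = i := Nat.succ_pred_eq_of_pos hi
        have h2 : min ((i + 1) - 1) n = i := by omega
        rw [h1] at hU
        rw [h2]
        have := hdec (i - 1) h U hU
        rw [hi1] at this
        exact unionOfFams_mono (hRS i) this
      · have h1 : min (i - 1) n = n := min_eq_right h
        have h2 : min ((i + 1) - 1) n = n := by omega
        rw [h1] at hU
        rw [h2]
        exact unionOfFams_self (hk i) _ hU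
    · simpa using hbd
  · rintro ⟨nseq, hn, hX⟩
    refine ⟨nseq, hn, ?_⟩
    intro R hR _
    obtain ⟨𝒱, h1, hdec, m, hm, hbd⟩ := hX R hR
    refine ⟨m - 1, fun i => 𝒱 (i + 1), h1, ?_, ?_⟩
    · intro i hi U hU
      exact hdec (i + 1) (by omega) U hU
    · have hm1 : m - 1 + 1 = m := Nat.succ_pred_eq_of_pos hm
      simp only [hm1]
      exact hbd
end
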